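/- Let λ be a partition with two parts, μ a content vector with |μ| = |λ|, α defined by αᵢ = Σ_{j>i} μⱼ, and ν by νᵢ = αᵢ + μᵢ (ν_ℓ = μ_ℓ). For any semistandard tableau T of shape λ and content μ with entries in {1,…,ℓ}, the skew filling S(T) of λ*α, obtained by placing T on the λ-part and filling the i-th row of the α-part entirely with i's, is a Littlewood-Richardson skew tableau of content ν. -/

import Mathlib

open Finset

/-- The two-row Young diagram with row lengths `l1` (top) and `l2` (bottom).
In intended uses `l2 ≤ l1`. -/
def twoRow (l1 l2 : ℕ) : YoungDiagram :=
  YoungDiagram.ofRowLens [max l1 l2, l2] (by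
    simp [List.sortedGE_iff_pairwise, le_max_right])

/-- The number of cells of `T` with entry `v` (entries are 0-indexed). -/
def content {sh : YoungDiagram} (T : SemistandardYoungTableau sh) (v : ℕ) : ℕ :=
  (sh.cells.filter fun c => T c.1 c.2 = v).card

/-- Kostka number: the number of semistandard Young tableaux of shape `sh`
with content `c` (entries 0-indexed: `c v` copies of entry `v`). -/
noncomputable def kostka (sh : YoungDiagram) (c : ℕ → ℕ) : ℕ :=
  Nat.card {T : SemistandardYoungTableau sh // ∀ v, content T v = c v}

/-- A skew semistandard tableau on the skew shape whose `i`-th row occupies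
columns `[lo i, lo i + len i)`: rows weakly increase, columns strictly increase,
entries vanish off the shape. -/
structure SkewTab (lo len : ℕ → ℕ) where
  entry : ℕ → ℕ → ℕ
  rowWeak : ∀ i j1 j2, lo i ≤ j1 → j1 ≤ j2 → j2 < lo i + len i → entry i j1 ≤ entry i j2
  colStrict : ∀ i j, lo i ≤ j → j < lo i + len i → lo (i + 1) ≤ j →
    j < lo (i + 1) + len (i + 1) → entry i j < entry (i + 1) j
  zeros : ∀ i j, ¬(lo i ≤ j ∧ j < lo i + len i) → entry i j = 0

/-- The reading word: each row read right to left, rows top to bottom. -/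
def readWord (lo len : ℕ → ℕ) (rows : ℕ) (T : SkewTab lo len) : List ℕ :=
  (List.range rows).flatMap fun i =>
    (List.range (len i)).reverse.map fun t => T.entry i (lo i + t)

/-- A word is a lattice word: every prefix has at least as many `v`'s as `(v+1)`'s. -/
def IsLattice (w : List ℕ) : Prop := ∀ n v, (w.take n).count (v + 1) ≤ (w.take n).count v

/-- Number of copies of `v` in row `i` of the skew tableau `T`. -/
def rowContent (lo len : ℕ → ℕ) (T : SkewTab lo len) (i v : ℕ) : ℕ :=
  ((Finset.Ico (lo i) (lo i + len i)).filter fun j => T.entry i j = v).card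

/-- Total number of copies of `v` in the skew tableau `T` (with `rows` rows). -/
def skewContent (lo len : ℕ → ℕ) (rows : ℕ) (T : SkewTab lo len) (v : ℕ) : ℕ :=
  ∑ i ∈ Finset.range rows, rowContent lo len T i v

/-- Left endpoints of the rows of the skew shape `λ*α` where `λ = (l1, l2)` and
`α` has `m` rows: the `m` rows of `α` start at column `l1`, the two rows of `λ` at column 0. -/
def starLo (l1 m : ℕ) (i : ℕ) : ℕ := if i < m then l1 else 0

/-- Row lengths of the skew shape `λ*α`, `λ = (l1, l2)`, `α` with `m` rows. -/
def starLen (l1 l2 : ℕ) (a : ℕ → ℕ) (m : ℕ) (i : ℕ) : ℕ :=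
  if i < m then a i else if i = m then l1 else if i = m + 1 then l2 else 0

/-!
Row `i` of the `α`-part is filled with `α i` copies of `i`, so that part of the reading word is
the staircase `0^{α 0} 1^{α 1} ⋯`. It is a lattice word because `α` is decreasing, and after it
every letter `v` has occurred exactly `α v` times. The rest of the word is the reading word of
`T`, in which `v + 1` occurs `μ (v + 1) = α v - α (v + 1)` times in all, so no prefix can use up
the surplus of `v`'s over `(v + 1)`'s built by the staircase. Only the content of `T`, not its
semistandardness, enters the lattice condition.
-/

theorem IsLattice.append {u t : List ℕ} (hu : IsLattice u)
    (ht : ∀ v, t.count (v + 1) + u.count (v + 1) ≤ u.count v) : IsLattice (u ++ t) := by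
  intro n v
  rw [List.take_append]
  by_cases hn : n ≤ u.length
  · simpa [Nat.sub_eq_zero_of_le hn] using hu n v
  · rw [List.take_of_length_le (by omega), List.count_append, List.count_append]
    have hprefix := (List.take_sublist (n - u.length) t).count_le (v + 1)
    have hsurplus := ht v
    omega

def staircase (a : ℕ → ℕ) (m : ℕ) : List ℕ :=
  (List.range m).flatMap fun i => List.replicate (a i) i

theorem staircase_succ (a : ℕ → ℕ) (m : ℕ) :
    staircase a (m + 1) = staircase a m ++ List.replicate (a m) m := by
  simp [staircase, List.range_succ, List.flatMap_append]

theorem count_staircase (a : ℕ → ℕ) (m v : ℕ) :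
    (staircase a m).count v = if v < m then a v else 0 := by
  induction m with
  | zero => simp [staircase]
  | succ m ih =>
    rw [staircase_succ, List.count_append, ih, List.count_replicate]
    split_ifs <;> grind

theorem isLattice_staircase {a : ℕ → ℕ} (ha : Antitone a) (m : ℕ) :
    IsLattice (staircase a m) := by
  induction m with
  | zero => intro n v; simp [staircase]
  | succ m ih =>
    rw [staircase_succ]
    refine ih.append fun v => ?_
    rw [List.count_replicate, count_staircase, count_staircase]
    have := ha (Nat.le_succ v)
    split_ifs <;> grind

theorem count_reverse_map_range (g : ℕ → ℕ) (n v : ℕ) :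
    ((List.range n).reverse.map g).count v = #{t ∈ range n | g t = v} := by
  rw [List.map_reverse, List.count_reverse, ← Multiset.coe_count, ← Multiset.map_coe,
    Multiset.count_map]
  simp only [card_def, filter_val, range_val, eq_comm]
  rfl

section SkewTab

variable {lo len : ℕ → ℕ}

theorem readWord_succ (rows : ℕ) (S : SkewTab lo len) :
    readWord lo len (rows + 1) S =
      readWord lo len rows S ++
        (List.range (len rows)).reverse.map fun t => S.entry rows (lo rows + t) := by
  simp [readWord, List.range_succ, List.flatMap_append]

theorem rowContent_eq_count (S : SkewTab lo len) (i v : ℕ) :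
    rowContent lo len S i v =
      ((List.range (len i)).reverse.map fun t => S.entry i (lo i + t)).count v := by
  rw [count_reverse_map_range, rowContent]
  simp only [card_filter, sum_Ico_eq_sum_range, Nat.add_sub_cancel_left]

theorem skewContent_eq_count_readWord (rows : ℕ) (S : SkewTab lo len) (v : ℕ) :
    skewContent lo len rows S v = (readWord lo len rows S).count v := by
  induction rows with
  | zero => simp [skewContent, readWord]
  | succ rows ih =>
    rw [skewContent, sum_range_succ, ← skewContent, ih, readWord_succ, List.count_append,
      rowContent_eq_count]

end SkewTab

section TwoRow

variable {l1 l2 : ℕ}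

theorem mem_twoRow (hl : l2 ≤ l1) {i j : ℕ} :
    (i, j) ∈ twoRow l1 l2 ↔ (i = 0 ∧ j < l1) ∨ (i = 1 ∧ j < l2) := by
  rcases i with _ | _ | i <;> simp [twoRow, YoungDiagram.mem_ofRowLens, max_eq_left hl]

theorem twoRow_cells (hl : l2 ≤ l1) :
    (twoRow l1 l2).cells = (range l1).map (.sectR 0 ℕ) ∪ (range l2).map (.sectR 1 ℕ) := by
  ext ⟨i, j⟩
  simp only [YoungDiagram.mem_cells, mem_twoRow hl, mem_union, mem_map, mem_range,
    Function.Embedding.sectR_apply, Prod.mk.injEq]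
  constructor
  · rintro (⟨rfl, h⟩ | ⟨rfl, h⟩)
    exacts [.inl ⟨j, h, rfl, rfl⟩, .inr ⟨j, h, rfl, rfl⟩]
  · rintro (⟨j, h, rfl, rfl⟩ | ⟨j, h, rfl, rfl⟩)
    exacts [.inl ⟨rfl, h⟩, .inr ⟨rfl, h⟩]

def twoRowWord (T : SemistandardYoungTableau (twoRow l1 l2)) : List ℕ :=
  (List.range l1).reverse.map (T 0) ++ (List.range l2).reverse.map (T 1)

theorem count_twoRowWord (hl : l2 ≤ l1) (T : SemistandardYoungTableau (twoRow l1 l2)) (v : ℕ) :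
    (twoRowWord T).count v = content T v := by
  have hdisj : Disjoint ((range l1).map (.sectR 0 ℕ)) ((range l2).map (.sectR 1 ℕ)) := by
    simp [disjoint_left]
  rw [content, twoRow_cells hl, filter_union, card_union_of_disjoint (disjoint_filter_filter hdisj),
    filter_map, filter_map, card_map, card_map, twoRowWord, List.count_append,
    count_reverse_map_range, count_reverse_map_range]
  rfl

end TwoRow

section StarFilling

variable {l1 l2 : ℕ} {a : ℕ → ℕ} {m : ℕ}

theorem mem_starRow_iff {i j : ℕ} :
    starLo l1 m i ≤ j ∧ j < starLo l1 m i + starLen l1 l2 a m i ↔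
      (i < m ∧ l1 ≤ j ∧ j < l1 + a i) ∨ (i = m ∧ j < l1) ∨ (i = m + 1 ∧ j < l2) := by
  simp only [starLo, starLen]
  split_ifs <;> omega

variable (a m) in
def starEntry (T : SemistandardYoungTableau (twoRow l1 l2)) (i j : ℕ) : ℕ :=
  if i < m then if l1 ≤ j ∧ j < l1 + a i then i else 0 else T (i - m) j

theorem starEntry_of_mem {T : SemistandardYoungTableau (twoRow l1 l2)} {i j : ℕ}
    (hlo : starLo l1 m i ≤ j) (hlen : j < starLo l1 m i + starLen l1 l2 a m i) :
    starEntry a m T i j = if i < m then i else T (i - m) j := by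
  have := mem_starRow_iff.1 ⟨hlo, hlen⟩
  unfold starEntry
  split_ifs <;> omega

theorem starEntry_rowWeak (hl : l2 ≤ l1) (T : SemistandardYoungTableau (twoRow l1 l2))
    {i j1 j2 : ℕ} (h1 : starLo l1 m i ≤ j1) (h12 : j1 ≤ j2)
    (h2 : j2 < starLo l1 m i + starLen l1 l2 a m i) :
    starEntry a m T i j1 ≤ starEntry a m T i j2 := by
  rw [starEntry_of_mem h1 (by omega), starEntry_of_mem (h1.trans h12) h2]
  rcases mem_starRow_iff.1 ⟨h1.trans h12, h2⟩ with ⟨hi, -⟩ | ⟨rfl, hj⟩ | ⟨rfl, hj⟩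
  · simp [hi]
  · simpa using T.row_weak_of_le h12 ((mem_twoRow hl).2 (.inl ⟨rfl, hj⟩))
  · simpa using T.row_weak_of_le h12 ((mem_twoRow hl).2 (.inr ⟨rfl, hj⟩))

theorem starEntry_colStrict (hl : l2 ≤ l1) (T : SemistandardYoungTableau (twoRow l1 l2))
    {i j : ℕ} (h1 : starLo l1 m i ≤ j) (h2 : j < starLo l1 m i + starLen l1 l2 a m i)
    (h3 : starLo l1 m (i + 1) ≤ j) (h4 : j < starLo l1 m (i + 1) + starLen l1 l2 a m (i + 1)) :
    starEntry a m T i j < starEntry a m T (i + 1) j := by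
  rw [starEntry_of_mem h1 h2, starEntry_of_mem h3 h4]
  have hrow := mem_starRow_iff.1 ⟨h1, h2⟩
  rcases mem_starRow_iff.1 ⟨h3, h4⟩ with ⟨hi, -⟩ | ⟨hi, hj⟩ | ⟨hi, hj⟩
  · simp [hi, show i < m by omega]
  · omega
  · simpa [show i = m by omega] using
      T.col_strict zero_lt_one ((mem_twoRow hl).2 (.inr ⟨rfl, hj⟩))

theorem starEntry_zeros (hl : l2 ≤ l1) (T : SemistandardYoungTableau (twoRow l1 l2)) {i j : ℕ}
    (h : ¬(starLo l1 m i ≤ j ∧ j < starLo l1 m i + starLen l1 l2 a m i)) :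
    starEntry a m T i j = 0 := by
  rw [mem_starRow_iff] at h
  unfold starEntry
  split_ifs with hi hj
  · omega
  · rfl
  · exact T.zeros fun hmem => h (by rw [mem_twoRow hl] at hmem; omega)

variable (a m) in
def starTab (hl : l2 ≤ l1) (T : SemistandardYoungTableau (twoRow l1 l2)) :
    SkewTab (starLo l1 m) (starLen l1 l2 a m) where
  entry := starEntry a m T
  rowWeak _ _ _ := starEntry_rowWeak hl T
  colStrict _ _ := starEntry_colStrict hl T
  zeros _ _ := starEntry_zeros hl T

theorem readWord_starTab (hl : l2 ≤ l1) (T : SemistandardYoungTableau (twoRow l1 l2)) :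
    readWord (starLo l1 m) (starLen l1 l2 a m) (m + 2) (starTab a m hl T) =
      staircase a m ++ twoRowWord T := by
  rw [readWord_succ, readWord_succ, List.append_assoc, twoRowWord]
  congr 1
  · refine List.flatMap_congr fun i hi => ?_
    have hi : i < m := List.mem_range.1 hi
    simp only [starLo, starLen, hi, if_true]
    rw [List.eq_replicate_iff]
    simp_all [starTab, starEntry]
  · simp [starLo, starLen, starTab, starEntry]

end StarFilling

theorem stmt8_general (l1 l2 L : ℕ) (hl : l2 ≤ l1) (hL : 1 ≤ L) (mu : ℕ → ℕ)
    (hmu : ∀ i, L ≤ i → mu i = 0)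
    (T : SemistandardYoungTableau (twoRow l1 l2)) (hT : ∀ v, content T v = mu v) :
    ∃ S : SkewTab (starLo l1 (L - 1)) (starLen l1 l2 (fun i => ∑ w ∈ Finset.Ico (i + 1) L, mu w) (L - 1)),
      (∀ i j, starLo l1 (L - 1) i ≤ j →
          j < starLo l1 (L - 1) i + starLen l1 l2 (fun i => ∑ w ∈ Finset.Ico (i + 1) L, mu w) (L - 1) i →
          S.entry i j = if i < L - 1 then i else T (i - (L - 1)) j) ∧
      IsLattice (readWord (starLo l1 (L - 1)) (starLen l1 l2 (fun i => ∑ w ∈ Finset.Ico (i + 1) L, mu w) (L - 1)) (L + 1) S) ∧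
      (∀ v, skewContent (starLo l1 (L - 1)) (starLen l1 l2 (fun i => ∑ w ∈ Finset.Ico (i + 1) L, mu w) (L - 1)) (L + 1) S v =
        ∑ w ∈ Finset.Ico v L, mu w) := by
  set a := fun i => ∑ w ∈ Ico (i + 1) L, mu w
  have hsplit (v : ℕ) : ∑ w ∈ Ico v L, mu w = mu v + a v := by
    rcases lt_or_ge v L with hv | hv
    · exact sum_eq_sum_Ico_succ_bot hv mu
    · simp [a, hmu v hv, Ico_eq_empty_of_le hv, Ico_eq_empty_of_le (hv.trans v.le_succ)]
  have hstair (v : ℕ) : (staircase a (L - 1)).count v = a v := by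
    rw [count_staircase]
    split_ifs with hv
    · rfl
    · simp [a, Ico_eq_empty_of_le (show L ≤ v + 1 by omega)]
  have hword : readWord _ _ (L + 1) (starTab a (L - 1) hl T) =
      staircase a (L - 1) ++ twoRowWord T := by
    rw [show L + 1 = L - 1 + 2 by omega, readWord_starTab]
  have ha : Antitone a := fun i j hij => sum_le_sum_of_subset (Ico_subset_Ico_left (by omega))
  refine ⟨starTab a (L - 1) hl T, fun i j => starEntry_of_mem, ?_, fun v => ?_⟩
  · rw [hword]
    refine (isLattice_staircase ha _).append fun v => ?_
    rw [count_twoRowWord hl, hT, hstair, hstair, ← hsplit]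
  · rw [skewContent_eq_count_readWord, hword, List.count_append, count_twoRowWord hl, hT, hstair,
      hsplit, add_comm]

/-- For any SSYT `T` of shape `λ = (l1, l2)` and content `μ`, the skew filling
of `λ*α` placing `T` on the `λ`-part and filling row `i` of the `α`-part with `i`'s
(0-indexed) is an LR skew tableau of content `ν` (`α i = Σ_{j>i} μ j`, `ν i = Σ_{j≥i} μ j`). -/
theorem stmt8 (l1 l2 L : ℕ) (hl : l2 ≤ l1) (hL : 1 ≤ L) (mu : ℕ → ℕ)
    (hmu : ∀ i, L ≤ i → mu i = 0) (hsum : l1 + l2 = ∑ j ∈ Finset.range L, mu j)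
    (T : SemistandardYoungTableau (twoRow l1 l2)) (hT : ∀ v, content T v = mu v) :
    ∃ S : SkewTab (starLo l1 (L - 1)) (starLen l1 l2 (fun i => ∑ w ∈ Finset.Ico (i + 1) L, mu w) (L - 1)),
      (∀ i j, starLo l1 (L - 1) i ≤ j →
          j < starLo l1 (L - 1) i + starLen l1 l2 (fun i => ∑ w ∈ Finset.Ico (i + 1) L, mu w) (L - 1) i →
          S.entry i j = if i < L - 1 then i else T (i - (L - 1)) j) ∧
      IsLattice (readWord (starLo l1 (L - 1)) (starLen l1 l2 (fun i => ∑ w ∈ Finset.Ico (i + 1) L, mu w) (L - 1)) (L + 1) S) ∧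
      (∀ v, skewContent (starLo l1 (L - 1)) (starLen l1 l2 (fun i => ∑ w ∈ Finset.Ico (i + 1) L, mu w) (L - 1)) (L + 1) S v =
        ∑ w ∈ Finset.Ico v L, mu w) :=
  stmt8_general l1 l2 L hl hL mu hmu T hT
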